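/- As x → +∞ along the reals, Γ(x−1/2)/Γ(x) = (x−1/2)^(−1/2)·(1 + 1/(8(x−1/2)) + 1/(128(x−1/2)²) − 5/(1024(x−1/2)³)) + O(x^(−9/2)); that is, the function x ↦ Γ(x−1/2)/Γ(x) − (x−1/2)^(−1/2)·(1 + 1/(8(x−1/2)) + 1/(128(x−1/2)²) − 5/(1024(x−1/2)³)) is O(x^(−9/2)) along Filter.atTop. -/

import Mathlib

/-!
Put `g y = y Γ(y)² / Γ(y + 1/2)²`. Log-convexity of `Γ` squeezes `g y` between `1` and
`1 + 1/(2y)`, and `Γ(y + 1) = y Γ(y)` gives `g (y + 1) = g y · y (y + 1) / (y + 1/2)²`.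
The truncated series `P y = 1 + 1/(8y) + 1/(128y²) - 5/(1024y³)` satisfies the same recurrence
for `P²` up to a factor `1 + O(y⁻⁵)`, so `L = log (g / P²)` tends to `0` with increments
`L y - L (y + 1) = O(y⁻⁵)`. Summing the increments gives `L = O(y⁻⁴)`, that is
`√y Γ(y) / Γ(y + 1/2) = P y (1 + O(y⁻⁴))`, and the substitution `y = x - 1/2` gives the expansion.
-/

open Filter Asymptotics Topology Real

lemma Gamma_add_half_sq_le {s : ℝ} (hs : 0 < s) : Gamma (s + 1 / 2) ^ 2 ≤ s * Gamma s ^ 2 := by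
  have hΓ := Gamma_pos_of_pos hs
  have h := Gamma_mul_add_mul_le_rpow_Gamma_mul_rpow_Gamma hs (by linarith : (0 : ℝ) < s + 1)
    one_half_pos one_half_pos (add_halves 1)
  rw [show 1 / 2 * s + 1 / 2 * (s + 1) = s + 1 / 2 by ring,
    ← mul_rpow hΓ.le (Gamma_pos_of_pos (by linarith)).le, ← sqrt_eq_rpow,
    Gamma_add_one hs.ne'] at h
  calc Gamma (s + 1 / 2) ^ 2 ≤ √(Gamma s * (s * Gamma s)) ^ 2 :=
        pow_le_pow_left₀ (Gamma_pos_of_pos (by linarith)).le h 2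
    _ = s * Gamma s ^ 2 := by rw [sq_sqrt (by positivity)]; ring

lemma natCast_div_pow_succ_le_inv_pow_sub_inv_pow {a : ℝ} (ha : 0 < a) (k : ℕ) :
    k / (a + 1) ^ (k + 1) ≤ (a ^ k)⁻¹ - ((a + 1) ^ k)⁻¹ := by
  have hbern := one_add_mul_le_pow (by linarith [inv_pos.2 ha] : (-2 : ℝ) ≤ a⁻¹) (k + 1)
  have hexp : (a + 1) ^ (k + 1) = a ^ (k + 1) * (1 + a⁻¹) ^ (k + 1) := by
    rw [← mul_pow]; field_simp
  have hB : a ^ (k + 1) + (k + 1) * a ^ k ≤ (a + 1) ^ (k + 1) := by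
    rw [hexp]
    calc a ^ (k + 1) + (k + 1) * a ^ k = a ^ (k + 1) * (1 + ((k + 1 : ℕ) : ℝ) * a⁻¹) := by
          push_cast; field_simp; ring
      _ ≤ _ := by gcongr
  have hX : 0 < (a + 1) ^ k := by positivity
  have hY : 0 < a ^ k := by positivity
  rw [inv_sub_inv hY.ne' hX.ne', div_le_div_iff₀ (by positivity) (by positivity)]
  rw [pow_succ, pow_succ] at *
  nlinarith [mul_le_mul_of_nonneg_left hB hX.le]

lemma abs_le_of_abs_sub_add_one_le {L φ : ℝ → ℝ} {t : ℝ} (hL : Tendsto L atTop (𝓝 0))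
    (hφ : Tendsto φ atTop (𝓝 0))
    (h : ∀ n : ℕ, |L (t + n) - L (t + n + 1)| ≤ φ (t + n) - φ (t + n + 1)) :
    |L t| ≤ φ t := by
  have hpartial (n : ℕ) : |L t - L (t + n)| ≤ φ t - φ (t + n) := by
    induction n with
    | zero => simp
    | succ n ih =>
      push_cast
      rw [← add_assoc]
      linarith [abs_sub_le (L t) (L (t + n)) (L (t + n + 1)), h n]
  have hshift : Tendsto (fun n : ℕ ↦ t + n) atTop atTop :=
    tendsto_atTop_add_const_left _ t tendsto_natCast_atTop_atTop
  refine le_of_tendsto_of_tendsto' (b := atTop) ?_ ?_ hpartial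
  · simpa using ((hL.comp hshift).const_sub (L t)).abs
  · simpa using (hφ.comp hshift).const_sub (φ t)

lemma isBigO_inv_pow_of_sub_add_one_isBigO {L : ℝ → ℝ} {k : ℕ} (hk : k ≠ 0)
    (hL : Tendsto L atTop (𝓝 0))
    (h : (fun t ↦ L t - L (t + 1)) =O[atTop] fun t ↦ (t ^ (k + 1))⁻¹) :
    L =O[atTop] fun t ↦ (t ^ k)⁻¹ := by
  obtain ⟨C, hC, hCb⟩ := h.exists_pos
  obtain ⟨T, hT⟩ := eventually_atTop.1 hCb.bound
  set φ : ℝ → ℝ := fun s ↦ C / k * ((s - 1) ^ k)⁻¹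
  have hφ : Tendsto φ atTop (𝓝 0) := by
    simpa [φ, sub_eq_add_neg] using (tendsto_inv_atTop_zero.comp ((tendsto_pow_atTop hk).comp
      (tendsto_atTop_add_const_right _ (-1) tendsto_id))).const_mul (C / k)
  have hstep (s : ℝ) (hs : max T 2 ≤ s) : |L s - L (s + 1)| ≤ φ s - φ (s + 1) := by
    have hs0 : 0 < s := by linarith [le_max_right T 2]
    have hk0 : (0 : ℝ) < k := by positivity
    have hb := natCast_div_pow_succ_le_inv_pow_sub_inv_pow
      (by linarith [le_max_right T 2] : 0 < s - 1) k
    simp only [sub_add_cancel] at hb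
    calc |L s - L (s + 1)| ≤ C * ‖(s ^ (k + 1))⁻¹‖ := hT s (le_of_max_le_left hs)
      _ = C / k * (k / s ^ (k + 1)) := by
          rw [norm_inv, norm_pow, norm_of_nonneg hs0.le]; field_simp
      _ ≤ C / k * (((s - 1) ^ k)⁻¹ - (s ^ k)⁻¹) := by gcongr
      _ = φ s - φ (s + 1) := by simp only [φ, add_sub_cancel_right]; ring
  refine IsBigO.of_bound (C / k * 2 ^ k) ?_
  filter_upwards [eventually_ge_atTop (max T 2)] with t ht
  have ht2 : 2 ≤ t := le_of_max_le_right ht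
  have hLt := abs_le_of_abs_sub_add_one_le hL hφ fun n ↦
    hstep _ (by linarith [n.cast_nonneg (α := ℝ)])
  rw [norm_inv, norm_pow, norm_of_nonneg (by linarith : (0 : ℝ) ≤ t), norm_eq_abs]
  calc |L t| ≤ C / k * ((t - 1) ^ k)⁻¹ := hLt
    _ ≤ C / k * ((t / 2) ^ k)⁻¹ := by gcongr; linarith
    _ = C / k * 2 ^ k * (t ^ k)⁻¹ := by rw [div_pow, inv_div]; ring

noncomputable def gammaRatioSq (y : ℝ) : ℝ := y * Gamma y ^ 2 / Gamma (y + 1 / 2) ^ 2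

lemma gammaRatioSq_add_one {y : ℝ} (hy : 0 < y) :
    gammaRatioSq (y + 1) = gammaRatioSq y * (y * (y + 1) / (y + 1 / 2) ^ 2) := by
  have hΓ := (Gamma_pos_of_pos hy).ne'
  have hΓ' := (Gamma_pos_of_pos (by linarith : 0 < y + 1 / 2)).ne'
  rw [gammaRatioSq, gammaRatioSq, Gamma_add_one hy.ne',
    show y + 1 + 1 / 2 = y + 1 / 2 + 1 by ring, Gamma_add_one (by positivity)]
  field_simp

lemma tendsto_gammaRatioSq : Tendsto gammaRatioSq atTop (𝓝 1) := by
  have hupper : Tendsto (fun y : ℝ ↦ 1 + 1 / (2 * y)) atTop (𝓝 1) := by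
    simpa using (tendsto_const_nhds (x := (1 : ℝ))).add
      ((tendsto_const_nhds (x := (1 : ℝ))).div_atTop (tendsto_id.const_mul_atTop two_pos))
  refine tendsto_of_tendsto_of_tendsto_of_le_of_le' tendsto_const_nhds hupper ?_ ?_
  all_goals filter_upwards [eventually_gt_atTop 0] with y hy
  all_goals have hΓ := Gamma_pos_of_pos (by linarith : 0 < y + 1 / 2)
  · rw [gammaRatioSq, one_le_div (by positivity)]
    exact Gamma_add_half_sq_le hy
  · have h := Gamma_add_half_sq_le (by linarith : 0 < y + 1 / 2)
    rw [show y + 1 / 2 + 1 / 2 = y + 1 by ring, Gamma_add_one hy.ne'] at h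
    rw [gammaRatioSq, div_le_iff₀ (by positivity)]
    calc y * Gamma y ^ 2 = (y * Gamma y) ^ 2 / y := by field_simp
      _ ≤ (y + 1 / 2) * Gamma (y + 1 / 2) ^ 2 / y := by gcongr
      _ = (1 + 1 / (2 * y)) * Gamma (y + 1 / 2) ^ 2 := by field_simp

noncomputable def gammaRatioApprox (y : ℝ) : ℝ :=
  1 + 1 / (8 * y) + 1 / (128 * y ^ 2) - 5 / (1024 * y ^ 3)

noncomputable def gammaRatioApproxNum (y : ℝ) : ℝ := y ^ 3 + y ^ 2 / 8 + y / 128 - 5 / 1024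

lemma gammaRatioApprox_eq_div {y : ℝ} (hy : y ≠ 0) :
    gammaRatioApprox y = gammaRatioApproxNum y / y ^ 3 := by
  unfold gammaRatioApprox gammaRatioApproxNum
  field_simp

lemma pow_three_le_gammaRatioApproxNum {y : ℝ} (hy : 1 ≤ y) :
    y ^ 3 ≤ gammaRatioApproxNum y := by
  unfold gammaRatioApproxNum
  nlinarith

lemma gammaRatioApprox_pos {y : ℝ} (hy : 1 ≤ y) : 0 < gammaRatioApprox y := by
  rw [gammaRatioApprox_eq_div (by positivity)]
  exact div_pos ((pow_pos (by positivity) 3).trans_le (pow_three_le_gammaRatioApproxNum hy))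
    (by positivity)

lemma tendsto_gammaRatioApprox : Tendsto gammaRatioApprox atTop (𝓝 1) := by
  have h (c d : ℝ) (hd : 0 < d) {n : ℕ} (hn : n ≠ 0) :
      Tendsto (fun y : ℝ ↦ c / (d * y ^ n)) atTop (𝓝 0) :=
    tendsto_const_nhds.div_atTop ((tendsto_pow_atTop hn).const_mul_atTop hd)
  have hsum := (((tendsto_const_nhds (x := (1 : ℝ))).add (h 1 8 (by norm_num) one_ne_zero)).add
    (h 1 128 (by norm_num) two_ne_zero)).sub (h 5 1024 (by norm_num) three_ne_zero)
  simp only [pow_one, add_zero, sub_zero] at hsum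
  exact hsum

noncomputable def approxRecurrenceRatio (y : ℝ) : ℝ :=
  (y + 1 / 2) ^ 2 * gammaRatioApprox (y + 1) ^ 2 / (y * (y + 1) * gammaRatioApprox y ^ 2)

noncomputable def approxRecurrenceNum (y : ℝ) : ℝ :=
  -21 / 4096 * y ^ 8 - 273 / 32768 * y ^ 7 + 9819 / 524288 * y ^ 6 + 235413 / 4194304 * y ^ 5
    + 52037 / 1048576 * y ^ 4 + 17509 / 1048576 * y ^ 3 + 1251 / 1048576 * y ^ 2
    - 95 / 1048576 * y - 25 / 1048576

/-- The coefficients of `gammaRatioApprox` are the ones for which the terms of degree 9 to 13 of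
this numerator cancel. -/
lemma approxRecurrenceRatio_sub_one {y : ℝ} (hy : 1 ≤ y) :
    approxRecurrenceRatio y - 1 =
      approxRecurrenceNum y / ((y + 1) ^ 7 * gammaRatioApproxNum y ^ 2) := by
  have hp := (pow_pos (by positivity) 3).trans_le (pow_three_le_gammaRatioApproxNum hy)
  have hp' := (pow_pos (by positivity) 3).trans_le
    (pow_three_le_gammaRatioApproxNum (by linarith : 1 ≤ y + 1))
  rw [approxRecurrenceRatio, gammaRatioApprox_eq_div (by positivity),
    gammaRatioApprox_eq_div (by positivity)]
  field_simp
  unfold approxRecurrenceNum gammaRatioApproxNum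
  ring

lemma abs_approxRecurrenceNum_le {y : ℝ} (hy : 1 ≤ y) : |approxRecurrenceNum y| ≤ y ^ 8 := by
  have h (i : ℕ) (hi : i ≤ 8) : y ^ i ≤ y ^ 8 := pow_le_pow_right₀ hy hi
  have h0 (i : ℕ) : 0 ≤ y ^ i := by positivity
  have h1 : y ≤ y ^ 8 := by simpa using h 1 (by norm_num)
  have h8 : 1 ≤ y ^ 8 := one_le_pow₀ hy
  unfold approxRecurrenceNum
  rw [abs_le]
  constructor <;> linarith [h 7 (by norm_num), h 6 (by norm_num), h 5 (by norm_num),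
    h 4 (by norm_num), h 3 (by norm_num), h 2 (by norm_num), h0 7, h0 6, h0 5, h0 4, h0 3, h0 2,
    h0 8]

lemma approxRecurrenceRatio_sub_one_isBigO :
    (fun y ↦ approxRecurrenceRatio y - 1) =O[atTop] fun y ↦ (y ^ 5)⁻¹ := by
  refine IsBigO.of_bound 1 ?_
  filter_upwards [eventually_ge_atTop 1] with y hy
  have hp := pow_three_le_gammaRatioApproxNum hy
  have hy0 : 0 < y := by linarith
  have hp0 : 0 < gammaRatioApproxNum y := (pow_pos hy0 3).trans_le hp
  rw [norm_eq_abs, norm_eq_abs, approxRecurrenceRatio_sub_one hy, abs_div,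
    abs_of_pos (mul_pos (by positivity) (pow_pos hp0 2)),
    abs_of_pos (by positivity : 0 < (y ^ 5)⁻¹)]
  calc |approxRecurrenceNum y| / ((y + 1) ^ 7 * gammaRatioApproxNum y ^ 2)
      ≤ y ^ 8 / (y ^ 7 * (y ^ 3) ^ 2) := by
        gcongr
        · exact abs_approxRecurrenceNum_le hy
        · linarith
    _ = 1 * (y ^ 5)⁻¹ := by field_simp

lemma log_approxRecurrenceRatio_isBigO :
    (fun y ↦ log (approxRecurrenceRatio y)) =O[atTop] fun y ↦ (y ^ 5)⁻¹ := by
  have hlim : Tendsto approxRecurrenceRatio atTop (𝓝 1) := by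
    simpa using (approxRecurrenceRatio_sub_one_isBigO.trans_tendsto
      (tendsto_inv_atTop_zero.comp (tendsto_pow_atTop (by norm_num : 5 ≠ 0)))).add_const 1
  have hlog := (differentiableAt_log one_ne_zero).isBigO_sub.comp_tendsto hlim
  simp only [log_one, sub_zero, Function.comp_def] at hlog
  exact hlog.trans approxRecurrenceRatio_sub_one_isBigO

noncomputable def gammaRatioDefect (y : ℝ) : ℝ := gammaRatioSq y / gammaRatioApprox y ^ 2

lemma gammaRatioDefect_pos {y : ℝ} (hy : 1 ≤ y) : 0 < gammaRatioDefect y := by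
  have hΓ := Gamma_pos_of_pos (by linarith : 0 < y)
  have hΓ' := Gamma_pos_of_pos (by linarith : 0 < y + 1 / 2)
  exact div_pos (div_pos (mul_pos (by linarith) (pow_pos hΓ 2)) (pow_pos hΓ' 2))
    (pow_pos (gammaRatioApprox_pos hy) 2)

lemma gammaRatioDefect_div_add_one {y : ℝ} (hy : 1 ≤ y) :
    gammaRatioDefect y / gammaRatioDefect (y + 1) = approxRecurrenceRatio y := by
  have hΓ := Gamma_pos_of_pos (by linarith : 0 < y)
  have hΓ' := Gamma_pos_of_pos (by linarith : 0 < y + 1 / 2)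
  have hP := gammaRatioApprox_pos hy
  have hP' := gammaRatioApprox_pos (by linarith : 1 ≤ y + 1)
  rw [gammaRatioDefect, gammaRatioDefect, gammaRatioSq_add_one (by linarith),
    approxRecurrenceRatio, gammaRatioSq]
  have hy0 : 0 < y := by linarith
  field_simp

lemma log_gammaRatioDefect_isBigO :
    (fun y ↦ log (gammaRatioDefect y)) =O[atTop] fun y ↦ (y ^ 4)⁻¹ := by
  refine isBigO_inv_pow_of_sub_add_one_isBigO four_ne_zero ?_ ?_
  · have h : Tendsto gammaRatioDefect atTop (𝓝 (1 / 1 ^ 2)) :=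
      tendsto_gammaRatioSq.div (tendsto_gammaRatioApprox.pow 2) (by norm_num)
    rw [one_pow, div_one] at h
    have hlog := (continuousAt_log one_ne_zero).tendsto.comp h
    rwa [log_one] at hlog
  · refine log_approxRecurrenceRatio_isBigO.congr' ?_ EventuallyEq.rfl
    filter_upwards [eventually_ge_atTop 1] with y hy
    rw [← gammaRatioDefect_div_add_one hy, log_div (gammaRatioDefect_pos hy).ne'
      (gammaRatioDefect_pos (by linarith)).ne']

lemma sqrt_gammaRatioDefect_sub_one_isBigO :
    (fun y ↦ √(gammaRatioDefect y) - 1) =O[atTop] fun y ↦ (y ^ 4)⁻¹ := by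
  have hL := log_gammaRatioDefect_isBigO
  have hsqrt := (differentiableAt_exp.sqrt (exp_ne_zero 0)).isBigO_sub.comp_tendsto
    (hL.trans_tendsto (tendsto_inv_atTop_zero.comp (tendsto_pow_atTop four_ne_zero)))
  simp only [exp_zero, sqrt_one, sub_zero, Function.comp_def] at hsqrt
  refine (hsqrt.trans hL).congr' ?_ EventuallyEq.rfl
  filter_upwards [eventually_ge_atTop 1] with y hy
  rw [exp_log (gammaRatioDefect_pos hy)]

lemma Gamma_div_Gamma_add_half_eq {y : ℝ} (hy : 1 ≤ y) :
    Gamma y / Gamma (y + 1 / 2) =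
      y ^ (-(1 / 2) : ℝ) * gammaRatioApprox y * √(gammaRatioDefect y) := by
  have hy0 : 0 < y := by linarith
  have hΓ := Gamma_pos_of_pos hy0
  have hΓ' := Gamma_pos_of_pos (by linarith : 0 < y + 1 / 2)
  have hP := gammaRatioApprox_pos hy
  have hsqrt :
      √(gammaRatioDefect y) = √y * Gamma y / (Gamma (y + 1 / 2) * gammaRatioApprox y) := by
    rw [← sqrt_sq (by positivity :
      0 ≤ √y * Gamma y / (Gamma (y + 1 / 2) * gammaRatioApprox y))]
    congr 1
    rw [div_pow, mul_pow, mul_pow, sq_sqrt hy0.le, gammaRatioDefect, gammaRatioSq]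
    field_simp
  rw [hsqrt, rpow_neg hy0.le, ← sqrt_eq_rpow]
  field_simp

lemma Gamma_div_Gamma_add_half_sub_isBigO :
    (fun y ↦ Gamma y / Gamma (y + 1 / 2) - y ^ (-(1 / 2) : ℝ) * gammaRatioApprox y)
      =O[atTop] fun y ↦ y ^ (-(9 / 2) : ℝ) := by
  have h := ((isBigO_refl (fun y : ℝ ↦ y ^ (-(1 / 2) : ℝ)) atTop).mul
    (tendsto_gammaRatioApprox.isBigO_one ℝ)).mul sqrt_gammaRatioDefect_sub_one_isBigO
  refine h.congr' ?_ ?_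
  · filter_upwards [eventually_ge_atTop 1] with y hy
    rw [Gamma_div_Gamma_add_half_eq hy]
    ring
  · filter_upwards [eventually_gt_atTop 0] with y hy
    rw [mul_one, ← rpow_natCast, ← rpow_neg hy.le, ← rpow_add hy]
    norm_num

theorem gamma_ratio_asymptotic_expansion :
    (fun x : ℝ =>
        Real.Gamma (x - 1/2) / Real.Gamma x -
          (x - 1/2) ^ (-(1/2) : ℝ) *
            (1 + 1 / (8 * (x - 1/2)) + 1 / (128 * (x - 1/2) ^ 2)
              - 5 / (1024 * (x - 1/2) ^ 3)))
      =O[atTop] fun x : ℝ => x ^ (-(9/2) : ℝ) := by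
  have hshift : Tendsto (fun x : ℝ ↦ x - 1 / 2) atTop atTop :=
    tendsto_atTop_add_const_right _ _ tendsto_id
  have h := Gamma_div_Gamma_add_half_sub_isBigO.comp_tendsto hshift
  simp only [Function.comp_def, sub_add_cancel] at h
  refine h.trans ?_
  have hθ : (fun x : ℝ ↦ x - 1 / 2) =Θ[atTop] fun x ↦ x :=
    (IsEquivalent.refl.add_const_of_norm_tendsto_atTop tendsto_norm_atTop_atTop).isTheta
  exact (hθ.rpow ((eventually_ge_atTop (1 / 2)).mono fun x hx ↦ sub_nonneg.2 hx)
    (eventually_ge_atTop 0)).isBigO
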